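/- arXiv:1505.07088 — 5 statements merged into one kernel-verified Lean document; each statement's English description precedes it below -/
import Mathlib

section
/- Let n ≥ 1, let Λ ⊆ ℂⁿ be a full lattice, and let Φ : ℂⁿ → ℂⁿ be a bijective ℂ-linear map with Φ(Λ) ⊆ Λ. Then the following are equivalent: (1) there exist a point x ∈ ℂⁿ with x ∉ span_ℚ(Λ) and integers m > n' ≥ 0 such that Φ^m(x) − Φ^{n'}(x) ∈ Λ (i.e., the induced isogeny of the torus ℂⁿ/Λ has a non-torsion preperiodic point); (2) there exist an integer k ≥ 1 and a nonzero vector v ∈ span_ℚ(Λ) with Φ^k(v) = v (i.e., some iterate of the isogeny pointwise fixes a positive-dimensional subtorus); (3) some eigenvalue of Φ (i.e., some root of the characteristic polynomial of Φ over ℂ) is a root of unity. -/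
/-!
Let `V = span_ℚ Λ`: a finite-dimensional, hence countable, `ℚ`-subspace whose real span is
`ℂⁿ`. An endomorphism `T` preserving `V` and injective on `V` maps `V` onto `V`; its range then
contains `V`, so `T` is surjective and therefore injective on all of `ℂⁿ`.
For `T = Φ^m - Φ^{n'}` this shows that a preperiodic point outside `V` forces a nonzero vector
fixed by `Φ^(m - n')`, i.e. an eigenvalue that is a root of unity; for `T = Φ^k - 1` it shows
that a nonzero fixed vector of `Φ^k` can be found inside `V`. Conversely, if `Φ^k` fixes
`v ∈ V \ {0}`, some complex multiple of `v` lies outside the countable set `V` and is still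
fixed by `Φ^k`.
-/

open Module Set

theorem Submodule.FG.finiteDimensional_span_rat {E : Type*} [AddCommGroup E] [Module ℚ E]
    {Λ : Submodule ℤ E} (hΛ : Λ.FG) : FiniteDimensional ℚ (span ℚ (Λ : Set E)) := by
  obtain ⟨S, rfl⟩ := hΛ
  rw [Submodule.span_span_of_tower]
  exact FiniteDimensional.span_finset ℚ S

theorem Submodule.mapsTo_span_of_mapsTo {R S E : Type*} [Semiring R] [Semiring S] [AddCommMonoid E]
    [Module R E] [Module S E] [SMul R S] [IsScalarTower R S E]
    {Λ : Submodule R E} (f : E →ₗ[S] E) (hf : MapsTo f Λ Λ) :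
    MapsTo f (span S (Λ : Set E)) (span S (Λ : Set E)) := by
  have : span S (Λ : Set E) ≤ (span S (Λ : Set E)).comap f :=
    Submodule.span_le.mpr fun x hx => Submodule.subset_span (hf hx)
  exact fun x hx => this hx

section FiniteDimensional

variable {K E : Type*} [DivisionRing K] [AddCommGroup E] [Module K E]
  (V : Submodule K E) [FiniteDimensional K V] {f : E →ₗ[K] E}

theorem Submodule.surjOn_of_injOn (hmaps : MapsTo f V V) (hinj : InjOn f V) :
    SurjOn f V V := by
  have hres : Function.Injective (f.restrict fun x hx => hmaps hx) :=
    fun a b h => Subtype.ext (hinj a.2 b.2 (congrArg Subtype.val h))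
  intro w hw
  obtain ⟨y, hy⟩ := LinearMap.injective_iff_surjective.mp hres ⟨w, hw⟩
  exact ⟨y, y.2, congrArg Subtype.val hy⟩

theorem Submodule.mem_of_injective_of_apply_mem (hf : Function.Injective f)
    (hmaps : MapsTo f V V) {x : E} (hx : f x ∈ V) : x ∈ V := by
  obtain ⟨y, hy, hyx⟩ := V.surjOn_of_injOn hmaps hf.injOn hx
  exact hf hyx ▸ hy

end FiniteDimensional

theorem LinearMap.injective_of_eq_zero_of_mem_rat_span {E : Type*} [AddCommGroup E] [Module ℚ E]
    [Module ℝ E] [FiniteDimensional ℝ E] (V : Submodule ℚ E) [FiniteDimensional ℚ V]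
    (hV : Submodule.span ℝ (V : Set E) = ⊤) (T : E →ₗ[ℝ] E) (hmaps : MapsTo T V V)
    (hker : ∀ v ∈ V, T v = 0 → v = 0) : Function.Injective T := by
  have hinj : InjOn T.toAddMonoidHom.toRatLinearMap V := fun a ha b hb hab =>
    sub_eq_zero.mp (hker _ (V.sub_mem ha hb) (by simpa [sub_eq_zero] using hab))
  have hsurj := V.surjOn_of_injOn hmaps hinj
  refine LinearMap.injective_iff_surjective.mpr (LinearMap.range_eq_top.mp (eq_top_iff.mpr ?_))
  rw [← hV, Submodule.span_le, LinearMap.coe_range]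
  exact hsurj.subset_range

theorem exists_smul_notMem_of_countable {K E : Type*} [DivisionRing K] [Uncountable K]
    [AddCommGroup E] [Module K E] {s : Set E} (hs : s.Countable) {v : E} (hv : v ≠ 0) :
    ∃ c : K, c • v ∉ s := by
  by_contra! h
  exact not_countable_univ <| (hs.preimage (smul_left_injective K hv)).mono fun c _ => h c

theorem Module.End.exists_pow_apply_eq_self_iff {K V : Type*} [Field K] [IsAlgClosed K]
    [AddCommGroup V] [Module K V] [FiniteDimensional K V] (f : End K V) :
    (∃ k, 1 ≤ k ∧ ∃ w, w ≠ 0 ∧ (f ^ k) w = w) ↔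
      ∃ z, f.charpoly.IsRoot z ∧ ∃ k, 1 ≤ k ∧ z ^ k = 1 := by
  constructor
  · rintro ⟨k, hk, w, hw, hfix⟩
    have h1 : (1 : K) ∈ spectrum K (f ^ k) := by
      rw [← hasEigenvalue_iff_mem_spectrum]
      exact hasEigenvalue_of_hasEigenvector ⟨mem_eigenspace_iff.mpr (by rwa [one_smul]), hw⟩
    rw [spectrum.map_pow_of_pos f hk] at h1
    obtain ⟨z, hz, hzk⟩ := h1
    exact ⟨z, (mem_spectrum_iff_isRoot_charpoly f z).mp hz, k, hk, hzk⟩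
  · rintro ⟨z, hz, k, hk, hzk⟩
    obtain ⟨w, hw⟩ := ((hasEigenvalue_iff_isRoot_charpoly f z).mpr hz).exists_hasEigenvector
    exact ⟨k, hk, w, hw.2, by rw [hw.pow_apply, hzk, one_smul]⟩

theorem Module.End.mapsTo_pow_sub_pow {R S M : Type*} [Semiring R] [Ring S] [AddCommGroup M]
    [Module R M] [Module S M] {V : Submodule S M} {Φ : End R M} (hΦ : MapsTo Φ V V) (a b : ℕ) :
    MapsTo (Φ ^ a - Φ ^ b) V V := fun x hx => by
  simp only [LinearMap.sub_apply, End.coe_pow]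
  exact V.sub_mem (hΦ.iterate a hx) (hΦ.iterate b hx)

theorem Module.End.exists_pow_apply_eq_self_of_notMem {R E : Type*} [Semiring R]
    [AddCommGroup E] [Module R E] [Module ℚ E] {V : Submodule ℚ E} [FiniteDimensional ℚ V]
    {Φ : End R E} (hΦinj : Function.Injective Φ) (hΦ : MapsTo Φ V V) {x : E} (hx : x ∉ V)
    {m n' : ℕ} (hlt : n' < m) (hmem : (Φ ^ m) x - (Φ ^ n') x ∈ V) :
    ∃ w, w ≠ 0 ∧ (Φ ^ (m - n')) w = w := by
  have hT : ¬ Function.Injective (Φ ^ m - Φ ^ n') := fun hinj =>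
    hx (V.mem_of_injective_of_apply_mem (f := (Φ ^ m - Φ ^ n').toAddMonoidHom.toRatLinearMap)
      hinj (mapsTo_pow_sub_pow hΦ m n') hmem)
  obtain ⟨w, hTw, hw⟩ : ∃ w, (Φ ^ m - Φ ^ n') w = 0 ∧ w ≠ 0 := by
    simpa [injective_iff_map_eq_zero] using hT
  refine ⟨w, hw, hΦinj.iterate n' ?_⟩
  rw [← coe_pow, ← mul_apply, ← pow_add, Nat.add_sub_cancel' hlt.le]
  exact sub_eq_zero.mp hTw

theorem exists_mem_pow_apply_eq_self {ι : Type*} [Fintype ι] {V : Submodule ℚ (ι → ℂ)}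
    [FiniteDimensional ℚ V] (hV : Submodule.span ℝ (V : Set (ι → ℂ)) = ⊤)
    {Φ : End ℂ (ι → ℂ)} (hΦ : MapsTo Φ V V) {k : ℕ} {w : ι → ℂ} (hw : w ≠ 0)
    (hwk : (Φ ^ k) w = w) : ∃ v, v ≠ 0 ∧ v ∈ V ∧ (Φ ^ k) v = v := by
  by_contra! h
  have hinj := ((Φ ^ k - Φ ^ 0).restrictScalars ℝ).injective_of_eq_zero_of_mem_rat_span V
    hV (fun x hx => by simpa using End.mapsTo_pow_sub_pow hΦ k 0 hx) fun v hv hTv => by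
      by_contra hv0
      exact h v hv0 hv (by simpa [sub_eq_zero] using hTv)
  exact hw (hinj (by simp [hwk]))

theorem stmt_0_general (n : ℕ) (Λ : Submodule ℤ (Fin n → ℂ))
    (hdisc : DiscreteTopology Λ)
    (hfull : Submodule.span ℝ (Λ : Set (Fin n → ℂ)) = ⊤)
    (Φ : (Fin n → ℂ) →ₗ[ℂ] (Fin n → ℂ)) (hbij : Function.Bijective Φ)
    (hΛ : ∀ x ∈ Λ, Φ x ∈ Λ) :
    List.TFAE
      [ ∃ x : Fin n → ℂ, x ∉ Submodule.span ℚ (Λ : Set (Fin n → ℂ)) ∧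
          ∃ m n' : ℕ, n' < m ∧ (Φ ^ m) x - (Φ ^ n') x ∈ Λ,
        ∃ k : ℕ, 1 ≤ k ∧ ∃ v : Fin n → ℂ, v ≠ 0 ∧
          v ∈ Submodule.span ℚ (Λ : Set (Fin n → ℂ)) ∧ (Φ ^ k) v = v,
        ∃ z : ℂ, (LinearMap.charpoly Φ).IsRoot z ∧ ∃ k : ℕ, 1 ≤ k ∧ z ^ k = 1 ] := by
  set V := Submodule.span ℚ (Λ : Set (Fin n → ℂ))
  -- `Λ` is finitely generated because it is discrete: `instModuleFinite_of_discrete_submodule`.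
  have : FiniteDimensional ℚ V :=
    (Module.Finite.iff_fg.mp inferInstance).finiteDimensional_span_rat
  have hVspan : Submodule.span ℝ (V : Set (Fin n → ℂ)) = ⊤ :=
    eq_top_iff.mpr (hfull ▸ Submodule.span_mono Submodule.subset_span)
  have hΦV : MapsTo Φ V V :=
    Submodule.mapsTo_span_of_mapsTo (Φ.restrictScalars ℚ) fun x hx => hΛ x hx
  tfae_have 1 → 3 := by
    rintro ⟨x, hx, m, n', hlt, hmem⟩
    exact (End.exists_pow_apply_eq_self_iff Φ).mp ⟨m - n', by omega,
      End.exists_pow_apply_eq_self_of_notMem hbij.injective hΦV hx hlt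
        (Submodule.subset_span hmem)⟩
  tfae_have 3 → 2 := by
    intro h
    obtain ⟨k, hk, w, hw, hwk⟩ := (End.exists_pow_apply_eq_self_iff Φ).mpr h
    exact ⟨k, hk, exists_mem_pow_apply_eq_self hVspan hΦV hw hwk⟩
  tfae_have 2 → 1 := by
    rintro ⟨k, hk, v, hv, -, hvk⟩
    have hV : (V : Set (Fin n → ℂ)).Countable :=
      Set.countable_coe_iff.mp (Finsupp.Countable.of_moduleFinite (R := ℚ))
    have : Uncountable ℂ := Complex.ofReal_injective.uncountable
    obtain ⟨c, hc⟩ := exists_smul_notMem_of_countable (K := ℂ) hV hv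
    exact ⟨c • v, hc, k, 0, hk, by simp [hvk]⟩
  tfae_finish

/-- Proposition 2.9 (MainProp) of the paper, in the lattice model: for an isogeny
of a complex torus `ℂⁿ/Λ` induced by a bijective `ℂ`-linear map `Φ` preserving the
full lattice `Λ`, the following are equivalent: (1) there is a non-torsion
preperiodic point; (2) some iterate of `Φ` fixes a nonzero rational lattice vector
(i.e. pointwise fixes a positive-dimensional subtorus); (3) some eigenvalue of `Φ`
is a root of unity. -/
theorem stmt_0 (n : ℕ) (hn : 1 ≤ n) (Λ : Submodule ℤ (Fin n → ℂ))
    (hdisc : DiscreteTopology Λ)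
    (hfull : Submodule.span ℝ (Λ : Set (Fin n → ℂ)) = ⊤)
    (Φ : (Fin n → ℂ) →ₗ[ℂ] (Fin n → ℂ)) (hbij : Function.Bijective Φ)
    (hΛ : ∀ x ∈ Λ, Φ x ∈ Λ) :
    List.TFAE
      [ ∃ x : Fin n → ℂ, x ∉ Submodule.span ℚ (Λ : Set (Fin n → ℂ)) ∧
          ∃ m n' : ℕ, n' < m ∧ (Φ ^ m) x - (Φ ^ n') x ∈ Λ,
        ∃ k : ℕ, 1 ≤ k ∧ ∃ v : Fin n → ℂ, v ≠ 0 ∧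
          v ∈ Submodule.span ℚ (Λ : Set (Fin n → ℂ)) ∧ (Φ ^ k) v = v,
        ∃ z : ℂ, (LinearMap.charpoly Φ).IsRoot z ∧ ∃ k : ℕ, 1 ≤ k ∧ z ^ k = 1 ] :=
  stmt_0_general n Λ hdisc hfull Φ hbij hΛ
end

section
/- Let n ≥ 1, let Λ ⊆ ℂⁿ be a full lattice, and let Φ : ℂⁿ → ℂⁿ be a bijective ℂ-linear map with Φ(Λ) ⊆ Λ. If no eigenvalue of Φ (no root of its characteristic polynomial over ℂ) is a root of unity, then for every x ∈ ℂⁿ the following are equivalent: (i) there exist integers m > n' ≥ 0 with Φ^m(x) − Φ^{n'}(x) ∈ Λ; (ii) x ∈ span_ℚ(Λ). That is, the set of preperiodic points of the induced isogeny of the complex torus ℂⁿ/Λ is exactly the set of torsion points. -/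
/-!
A preperiodic point satisfies `ψ x ∈ Λ` for `ψ = Φ^m - Φ^n'`. A nonzero vector killed by `ψ`
would, `Φ` being injective, be fixed by `Φ^(m-n')`, and by spectral mapping some eigenvalue of `Φ`
would be a root of unity. Since `Λ`, being discrete, is a finitely generated `ℤ`-module, `ψ` is
then an injective endomorphism of the finite-dimensional `ℚ`-space `span_ℚ Λ`, hence onto it, and
`x ∈ span_ℚ Λ`. Conversely, if `c • x ∈ Λ` then all `c • Φ^k x` lie in `Λ`, and two of them
agree modulo the finite group `Λ / cΛ`; dividing by `c` makes the corresponding two iterates of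
`x` agree modulo `Λ`.
-/

open scoped Pointwise

namespace Module.End

theorem mapsTo_pow {R M : Type*} [Semiring R] [AddCommMonoid M] [Module R M] {f : End R M}
    {s : Set M} (h : Set.MapsTo f s s) (k : ℕ) : Set.MapsTo ⇑(f ^ k) s s := by
  rw [coe_pow]
  exact h.iterate k

variable {K V : Type*} [Field K] [IsAlgClosed K] [AddCommGroup V] [Module K V]
  [FiniteDimensional K V]

theorem exists_hasEigenvalue_pow_eq_one (f : End K V) {k : ℕ} {v : V} (hv : v ≠ 0)
    (hfix : (f ^ k) v = v) : ∃ μ, f.HasEigenvalue μ ∧ μ ^ k = 1 := by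
  have : Nontrivial V := ⟨⟨v, 0, hv⟩⟩
  have h1 : (1 : K) ∈ spectrum K (f ^ k) :=
    hasEigenvalue_iff_mem_spectrum.mp <|
      hasEigenvalue_of_hasEigenvector ⟨mem_eigenspace_iff.mpr (by simpa using hfix), hv⟩
  rw [spectrum.map_pow_of_nonempty (spectrum.nonempty_of_isAlgClosed_of_finiteDimensional K f)]
    at h1
  obtain ⟨μ, hμ, hμk⟩ := h1
  exact ⟨μ, hasEigenvalue_iff_mem_spectrum.mpr hμ, hμk⟩

theorem injective_pow_sub_pow (f : End K V) (hf : Function.Injective f)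
    (hroots : ∀ μ, f.HasEigenvalue μ → ∀ k, 1 ≤ k → μ ^ k ≠ 1) {m n : ℕ} (hnm : n < m) :
    Function.Injective ⇑(f ^ m - f ^ n) := by
  rw [injective_iff_map_eq_zero]
  intro v hv
  by_contra hv0
  have hfix : (f ^ (m - n)) v = v := by
    apply hf.iterate n
    rw [← pow_apply, ← pow_apply, ← mul_apply, ← pow_add, Nat.add_sub_cancel' hnm.le]
    exact sub_eq_zero.mp hv
  obtain ⟨μ, hμ, hμk⟩ := exists_hasEigenvalue_pow_eq_one f hv0 hfix
  exact hroots μ hμ (m - n) (by omega) hμk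

end Module.End

namespace Submodule

theorem mem_of_apply_mem_of_injective {K V : Type*} [Field K] [AddCommGroup V]
    [Module K V] (W : Submodule K V) [FiniteDimensional K W] {ψ : V →ₗ[K] V}
    (hψ : Function.Injective ψ) (hW : ∀ w ∈ W, ψ w ∈ W) {x : V} (hx : ψ x ∈ W) : x ∈ W := by
  let ψW : W →ₗ[K] W := ψ.restrict hW
  have hψW : Function.Injective ψW := fun a b hab => Subtype.ext (hψ congr($hab.1))
  obtain ⟨y, hy⟩ := LinearMap.surjective_of_injective hψW ⟨ψ x, hx⟩
  have hyx : (y : V) = x := hψ congr($hy.1)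
  exact hyx ▸ y.2

theorem exists_lt_sub_mem_of_finite_quotient {R M : Type*} [Ring R] [AddCommGroup M]
    [Module R M] (N : Submodule R M) [Finite (M ⧸ N)] (f : ℕ → M) :
    ∃ i j, i < j ∧ f j - f i ∈ N := by
  obtain ⟨i, j, hij, h⟩ := Set.finite_univ.exists_lt_map_eq_of_forall_mem
    (f := fun k => N.mkQ (f k)) fun _ => Set.mem_univ _
  exact ⟨i, j, hij, (Quotient.eq N).mp h.symm⟩

theorem finite_quotient_zsmul_top {M : Type*} [AddCommGroup M] [Module.Finite ℤ M]
    {c : ℤ} (hc : c ≠ 0) : Finite (M ⧸ c • (⊤ : Submodule ℤ M)) := by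
  have : NeZero c := ⟨hc⟩
  rw [← ideal_span_singleton_smul]
  exact finite_quotient_smul _ Module.Finite.fg_top

section Lattice

variable {E : Type*} [AddCommGroup E] (Λ : Submodule ℤ E)

theorem finiteDimensional_span_rat [Module ℚ E] [Module.Finite ℤ Λ] :
    FiniteDimensional ℚ (span ℚ (Λ : Set E)) := by
  obtain ⟨S, rfl⟩ : Λ.FG := Module.Finite.iff_fg.mp inferInstance
  rw [span_span_of_tower]
  exact FiniteDimensional.span_of_finite ℚ S.finite_toSet

theorem mem_span_rat_of_apply_mem_of_injective [Module ℚ E] [Module.Finite ℤ Λ] {ψ : E →ₗ[ℚ] E}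
    (hψ : Function.Injective ψ) (hΛ : ∀ y ∈ Λ, ψ y ∈ Λ) {x : E} (hx : ψ x ∈ Λ) :
    x ∈ span ℚ (Λ : Set E) := by
  have := Λ.finiteDimensional_span_rat
  refine (span ℚ (Λ : Set E)).mem_of_apply_mem_of_injective hψ (fun w hw => ?_) (subset_span hx)
  induction hw using span_induction with
  | mem y hy => exact subset_span (hΛ y hy)
  | zero => simp
  | add y z _ _ hy hz => simpa using add_mem hy hz
  | smul q y _ hy => simpa using smul_mem _ q hy

theorem exists_zsmul_mem_of_mem_span_rat [Module ℚ E] {x : E}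
    (hx : x ∈ span ℚ (Λ : Set E)) : ∃ c : ℤ, c ≠ 0 ∧ c • x ∈ Λ := by
  induction hx using span_induction with
  | mem y hy => exact ⟨1, one_ne_zero, by simpa using hy⟩
  | zero => exact ⟨1, one_ne_zero, by simp⟩
  | add y z _ _ hy hz =>
    obtain ⟨a, ha0, ha⟩ := hy
    obtain ⟨b, hb0, hb⟩ := hz
    refine ⟨a * b, mul_ne_zero ha0 hb0, ?_⟩
    rw [smul_add, mul_comm, mul_smul, mul_comm, mul_smul]
    exact add_mem (Λ.smul_mem b ha) (Λ.smul_mem a hb)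
  | smul q y _ hy =>
    obtain ⟨a, ha0, ha⟩ := hy
    refine ⟨q.den * a, mul_ne_zero (by exact_mod_cast q.den_ne_zero) ha0, ?_⟩
    have hclear : ((q.den : ℤ) * a) • q • y = q.num • a • y := by
      rw [mul_comm, mul_smul, ← Int.cast_smul_eq_zsmul ℚ (q.den : ℤ), smul_smul, Int.cast_natCast,
        Rat.den_mul_eq_num, Int.cast_smul_eq_zsmul, smul_comm]
    rw [hclear]
    exact Λ.smul_mem q.num ha

theorem exists_lt_pow_sub_pow_mem_of_zsmul_mem [IsAddTorsionFree E] {R : Type*} [Semiring R]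
    [Module R E] [Module.Finite ℤ Λ] {Φ : Module.End R E} (hΛ : ∀ y ∈ Λ, Φ y ∈ Λ) {c : ℤ}
    (hc : c ≠ 0) {x : E} (hx : c • x ∈ Λ) : ∃ m n, n < m ∧ (Φ ^ m) x - (Φ ^ n) x ∈ Λ := by
  have hmem (k : ℕ) : c • (Φ ^ k) x ∈ Λ := by
    rw [← map_zsmul]
    exact Φ.mapsTo_pow hΛ k hx
  have := finite_quotient_zsmul_top (M := Λ) hc
  obtain ⟨n, m, hnm, h⟩ :=
    exists_lt_sub_mem_of_finite_quotient (c • ⊤ : Submodule ℤ Λ) fun k => ⟨_, hmem k⟩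
  obtain ⟨u, -, hu⟩ := (mem_smul_pointwise_iff_exists _ _ _).mp h
  have hcu : c • (u : E) = c • ((Φ ^ m) x - (Φ ^ n) x) := by
    rw [smul_sub]
    exact congr($hu.1)
  exact ⟨m, n, hnm, zsmul_right_injective hc hcu ▸ u.2⟩

end Lattice

end Submodule

theorem stmt_1_general (n : ℕ) (Λ : Submodule ℤ (Fin n → ℂ))
    (hdisc : DiscreteTopology Λ)
    (Φ : (Fin n → ℂ) →ₗ[ℂ] (Fin n → ℂ)) (hbij : Function.Bijective Φ)
    (hΛ : ∀ x ∈ Λ, Φ x ∈ Λ)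
    (hunity : ∀ z : ℂ, (LinearMap.charpoly Φ).IsRoot z →
      ∀ k : ℕ, 1 ≤ k → z ^ k ≠ 1) :
    ∀ x : Fin n → ℂ,
      (∃ m n' : ℕ, n' < m ∧ (Φ ^ m) x - (Φ ^ n') x ∈ Λ) ↔
        x ∈ Submodule.span ℚ (Λ : Set (Fin n → ℂ)) := by
  intro x
  constructor
  · rintro ⟨m, n', hlt, hmem⟩
    have hroots : ∀ μ, Module.End.HasEigenvalue Φ μ → ∀ k, 1 ≤ k → μ ^ k ≠ 1 := fun μ hμ =>
      hunity μ ((Module.End.hasEigenvalue_iff_isRoot_charpoly Φ μ).mp hμ)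
    refine Λ.mem_span_rat_of_apply_mem_of_injective (ψ := (Φ ^ m - Φ ^ n').restrictScalars ℚ)
      (Module.End.injective_pow_sub_pow Φ hbij.injective hroots hlt) (fun y hy => ?_) hmem
    exact sub_mem (Module.End.mapsTo_pow hΛ m hy) (Module.End.mapsTo_pow hΛ n' hy)
  · intro hx
    obtain ⟨c, hc, hcx⟩ := Λ.exists_zsmul_mem_of_mem_span_rat hx
    exact Λ.exists_lt_pow_sub_pow_mem_of_zsmul_mem hΛ hc hcx

/-- For a unity-free isogeny of a complex torus `ℂⁿ/Λ` (no eigenvalue of the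
lifting `Φ` is a root of unity), the preperiodic points are exactly the torsion
points: `x` is preperiodic modulo `Λ` iff `x ∈ span_ℚ(Λ)`. -/
theorem stmt_1 (n : ℕ) (hn : 1 ≤ n) (Λ : Submodule ℤ (Fin n → ℂ))
    (hdisc : DiscreteTopology Λ)
    (hfull : Submodule.span ℝ (Λ : Set (Fin n → ℂ)) = ⊤)
    (Φ : (Fin n → ℂ) →ₗ[ℂ] (Fin n → ℂ)) (hbij : Function.Bijective Φ)
    (hΛ : ∀ x ∈ Λ, Φ x ∈ Λ)
    (hunity : ∀ z : ℂ, (LinearMap.charpoly Φ).IsRoot z →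
      ∀ k : ℕ, 1 ≤ k → z ^ k ≠ 1) :
    ∀ x : Fin n → ℂ,
      (∃ m n' : ℕ, n' < m ∧ (Φ ^ m) x - (Φ ^ n') x ∈ Λ) ↔
        x ∈ Submodule.span ℚ (Λ : Set (Fin n → ℂ)) :=
  stmt_1_general n Λ hdisc Φ hbij hΛ hunity
end

section
/- Let n ≥ 1, let Λ ⊆ ℂⁿ be a full lattice, and let Φ : ℂⁿ → ℂⁿ be a bijective ℂ-linear map with Φ(Λ) ⊆ Λ. If some eigenvalue of Φ (some root of its characteristic polynomial over ℂ) is a root of unity, then there exist an integer k ≥ 1 and a nonzero vector v ∈ span_ℚ(Λ) such that Φ^k(v) = v. -/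
/-!
An eigenvalue `z` of `Φ` with `z ^ k = 1` makes `Φ ^ k - 1` singular on `ℂⁿ`. This map preserves
`L = span_ℚ Λ`, which is finite-dimensional over `ℚ` and spans `ℂⁿ` over `ℝ`. If it were injective
on `L`, it would map `L` onto `L`, hence `ℂⁿ = span_ℝ L` onto itself, contradicting singularity.
-/

open Module Submodule

theorem LinearMap.exists_mem_ne_zero_apply_eq_zero_of_span_eq_top {K F V : Type*} [Field K]
    [Field F] [Algebra K F] [AddCommGroup V] [Module K V] [Module F V] [IsScalarTower K F V]
    [FiniteDimensional F V] {L : Submodule K V} [FiniteDimensional K L]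
    (hL : span F (L : Set V) = ⊤) {g : V →ₗ[F] V} (hgL : Set.MapsTo g L L)
    (hg : ¬ Function.Injective g) : ∃ v ∈ L, v ≠ 0 ∧ g v = 0 := by
  by_contra! h
  let gL : L →ₗ[K] L := (g.restrictScalars K).restrict hgL
  have hgL_inj : Function.Injective gL := by
    refine (injective_iff_map_eq_zero gL).mpr fun x hx => ?_
    by_contra hx0
    exact h x x.2 (by simpa using hx0) (congrArg Subtype.val hx)
  have hL_range : L ≤ (range g).restrictScalars K := fun x hx => by
    obtain ⟨y, hy⟩ := LinearMap.injective_iff_surjective.mp hgL_inj ⟨x, hx⟩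
    exact ⟨y, congrArg Subtype.val hy⟩
  have hg_surj : Function.Surjective g :=
    range_eq_top.mp (top_unique (hL ▸ span_le.mpr hL_range))
  exact hg (LinearMap.injective_iff_surjective.mpr hg_surj)

theorem Module.End.not_injective_sub_one_of_hasEigenvalue_one {R M : Type*} [CommRing R]
    [AddCommGroup M] [Module R M] {f : End R M} (hf : f.HasEigenvalue 1) :
    ¬ Function.Injective (f - 1 : End R M) := by
  rw [← LinearMap.ker_eq_bot]
  simpa [hasEigenvalue_iff, eigenspace_def] using hf

theorem stmt_6_general (n : ℕ) (Λ : Submodule ℤ (Fin n → ℂ))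
    (hdisc : DiscreteTopology Λ)
    (hfull : Submodule.span ℝ (Λ : Set (Fin n → ℂ)) = ⊤)
    (Φ : (Fin n → ℂ) →ₗ[ℂ] (Fin n → ℂ))
    (hΛ : ∀ x ∈ Λ, Φ x ∈ Λ)
    (hroot : ∃ z : ℂ, (LinearMap.charpoly Φ).IsRoot z ∧ ∃ k : ℕ, 1 ≤ k ∧ z ^ k = 1) :
    ∃ k : ℕ, 1 ≤ k ∧ ∃ v : Fin n → ℂ, v ≠ 0 ∧
      v ∈ Submodule.span ℚ (Λ : Set (Fin n → ℂ)) ∧ (Φ ^ k) v = v := by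
  obtain ⟨z, hz, k, hk, hzk⟩ := hroot
  refine ⟨k, hk, ?_⟩
  have hΦk : Module.End.HasEigenvalue (Φ ^ k) 1 :=
    hzk ▸ ((Module.End.hasEigenvalue_iff_isRoot_charpoly Φ z).mpr hz).pow k
  have hg : ¬ Function.Injective ((Φ ^ k - 1).restrictScalars ℝ) :=
    Module.End.not_injective_sub_one_of_hasEigenvalue_one hΦk
  have hgΛ : Set.MapsTo (Φ ^ k - 1 : Module.End ℂ (Fin n → ℂ)) Λ Λ := fun x hx => by
    rw [LinearMap.sub_apply, Module.End.pow_apply]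
    exact sub_mem (Set.MapsTo.iterate hΛ k hx) hx
  -- A discrete subgroup of a finite-dimensional real space is finitely generated.
  have hΛ_fg : Λ.FG := Module.Finite.iff_fg.mp inferInstance
  have : FiniteDimensional ℚ (span ℚ (Λ : Set (Fin n → ℂ))) := Module.Finite.iff_fg.mpr hΛ_fg.span
  obtain ⟨v, hvL, hv0, hv⟩ := LinearMap.exists_mem_ne_zero_apply_eq_zero_of_span_eq_top
    (K := ℚ) (F := ℝ) (by rwa [span_span_of_tower])
    (mapsTo_span (f := (Φ ^ k - 1).restrictScalars ℚ) hgΛ) hg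
  exact ⟨v, hv0, hvL, sub_eq_zero.mp hv⟩

/-- Step (3 ⇒ 2) in Proposition 2.9 (MainProp) of the paper: if some eigenvalue
of a bijective `ℂ`-linear map `Φ` preserving the full lattice `Λ ⊆ ℂⁿ` is a root
of unity, then some iterate of `Φ` fixes a nonzero vector of `span_ℚ(Λ)`. -/
theorem stmt_6 (n : ℕ) (hn : 1 ≤ n) (Λ : Submodule ℤ (Fin n → ℂ))
    (hdisc : DiscreteTopology Λ)
    (hfull : Submodule.span ℝ (Λ : Set (Fin n → ℂ)) = ⊤)
    (Φ : (Fin n → ℂ) →ₗ[ℂ] (Fin n → ℂ)) (hbij : Function.Bijective Φ)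
    (hΛ : ∀ x ∈ Λ, Φ x ∈ Λ)
    (hroot : ∃ z : ℂ, (LinearMap.charpoly Φ).IsRoot z ∧ ∃ k : ℕ, 1 ≤ k ∧ z ^ k = 1) :
    ∃ k : ℕ, 1 ≤ k ∧ ∃ v : Fin n → ℂ, v ≠ 0 ∧
      v ∈ Submodule.span ℚ (Λ : Set (Fin n → ℂ)) ∧ (Φ ^ k) v = v :=
  stmt_6_general n Λ hdisc hfull Φ hΛ hroot
end

section
/- Let p be a monic polynomial of degree 4 with integer coefficients, and let γ₁, γ₂ ∈ ℂ be such that the multiset of complex roots of p (with multiplicity) is {γ₁, γ₂, conj(γ₁), conj(γ₂)}. If |γ₁| = 1, then γ₁ is a root of unity: there exists an integer k ≥ 1 with γ₁^k = 1. -/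
/-!
Since `|γ₁| = 1`, `conj γ₁ = γ₁⁻¹`, so both `γ₁` and `γ₁⁻¹` are roots of `p`. For every embedding
`φ` of `ℚ(γ₁)` into `ℂ`, `φ γ₁` and `(φ γ₁)⁻¹ = φ (γ₁⁻¹)` are then roots of `p` as well, so both of
their absolute values lie in `{1, |γ₂|}`, which forces `|φ γ₁| = 1`. Kronecker's theorem then makes
the algebraic integer `γ₁` a root of unity.
-/

open Polynomial IntermediateField

theorem eq_one_of_inv_eq_one_or_eq {a r : ℝ} (ha : 0 < a) (h : a = 1 ∨ a = r)
    (h_inv : a⁻¹ = 1 ∨ a⁻¹ = r) : a = 1 := by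
  rcases h with h | rfl
  · exact h
  rcases h_inv with h_inv | h_inv
  · exact inv_eq_one.mp h_inv
  · nlinarith [inv_mul_cancel₀ ha.ne']

theorem aeval_ringHom_apply_eq_zero {K L : Type*} [CommRing K] [CommRing L] {f : ℤ[X]} {x : K}
    (hx : aeval x f = 0) (φ : K →+* L) : aeval (φ x) f = 0 := by
  rw [show φ x = φ.toIntAlgHom x from rfl, aeval_algHom_apply, hx, map_zero]

theorem Complex.exists_pow_eq_one_of_forall_embedding_norm_eq_one {z : ℂ} (hz : IsIntegral ℤ z)
    (h : ∀ φ : ℚ⟮z⟯ →+* ℂ, ‖φ (AdjoinSimple.gen ℚ z)‖ = 1) : ∃ k, 1 ≤ k ∧ z ^ k = 1 := by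
  have : FiniteDimensional ℚ ℚ⟮z⟯ := adjoin.finiteDimensional hz.tower_top
  have : NumberField ℚ⟮z⟯ := ⟨⟩
  obtain ⟨k, hk, hgen⟩ := NumberField.Embeddings.pow_eq_one_of_norm_eq_one ℚ⟮z⟯ ℂ
    (coe_isIntegral_iff.mp hz) h
  exact ⟨k, hk, by simpa using congrArg (algebraMap ℚ⟮z⟯ ℂ) hgen⟩

theorem exists_pow_eq_one_of_aeval_inv_eq_zero {f : ℤ[X]} (hf : f.Monic) {z : ℂ} {r : ℝ}
    (hz₀ : z ≠ 0) (hz : aeval z f = 0) (hz_inv : aeval z⁻¹ f = 0)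
    (hnorm : ∀ w : ℂ, aeval w f = 0 → ‖w‖ = 1 ∨ ‖w‖ = r) : ∃ k, 1 ≤ k ∧ z ^ k = 1 := by
  refine Complex.exists_pow_eq_one_of_forall_embedding_norm_eq_one ⟨f, hf, hz⟩ fun φ ↦ ?_
  have hgen : aeval (AdjoinSimple.gen ℚ z) f = 0 := by
    apply FaithfulSMul.algebraMap_injective ℚ⟮z⟯ ℂ
    rwa [← aeval_algebraMap_apply, map_zero]
  have hgen_inv : aeval (AdjoinSimple.gen ℚ z)⁻¹ f = 0 := by
    apply FaithfulSMul.algebraMap_injective ℚ⟮z⟯ ℂ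
    rwa [← aeval_algebraMap_apply, map_zero, map_inv₀]
  refine eq_one_of_inv_eq_one_or_eq ?_ (hnorm _ (aeval_ringHom_apply_eq_zero hgen φ)) ?_
  · rw [norm_pos_iff, map_ne_zero_iff _ φ.injective]
    exact fun h ↦ hz₀ ((congrArg (algebraMap ℚ⟮z⟯ ℂ) h).trans (map_zero _))
  · rw [← norm_inv, ← map_inv₀]
    exact hnorm _ (aeval_ringHom_apply_eq_zero hgen_inv φ)

theorem stmt_9_general (p : Polynomial ℤ) (hmonic : p.Monic)
    (γ₁ γ₂ : ℂ)
    (hroots : (p.map (Int.castRingHom ℂ)).roots =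
      {γ₁, γ₂, (starRingEnd ℂ) γ₁, (starRingEnd ℂ) γ₂})
    (habs : ‖γ₁‖ = 1) :
    ∃ k : ℕ, 1 ≤ k ∧ γ₁ ^ k = 1 := by
  rw [← algebraMap_int_eq, ← aroots_def] at hroots
  have hroot (w : ℂ) : aeval w p = 0 ↔
      w = γ₁ ∨ w = γ₂ ∨ w = (starRingEnd ℂ) γ₁ ∨ w = (starRingEnd ℂ) γ₂ := by
    have hmem := mem_aroots' (S := ℂ) (p := p) (a := w)
    rw [hroots] at hmem
    simpa [(hmonic.map _).ne_zero] using hmem.symm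
  have hγ₁ : γ₁ ≠ 0 := by
    rintro rfl
    simp at habs
  refine exists_pow_eq_one_of_aeval_inv_eq_zero (r := ‖γ₂‖) hmonic hγ₁ ((hroot _).mpr (by simp))
    ((hroot _).mpr (by simp [Complex.inv_eq_conj habs])) fun w hw ↦ ?_
  rcases (hroot w).mp hw with rfl | rfl | rfl | rfl <;> simp [habs]

/-- The arithmetic core of Proposition 4.4 (abeliansurfaces) of the paper: if a
monic integer polynomial of degree 4 has complex roots (with multiplicity)
`{γ₁, γ₂, conj γ₁, conj γ₂}` and `|γ₁| = 1`, then `γ₁` is a root of unity. -/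
theorem stmt_9 (p : Polynomial ℤ) (hmonic : p.Monic) (hdeg : p.natDegree = 4)
    (γ₁ γ₂ : ℂ)
    (hroots : (p.map (Int.castRingHom ℂ)).roots =
      {γ₁, γ₂, (starRingEnd ℂ) γ₁, (starRingEnd ℂ) γ₂})
    (habs : ‖γ₁‖ = 1) :
    ∃ k : ℕ, 1 ≤ k ∧ γ₁ ^ k = 1 :=
  stmt_9_general p hmonic γ₁ γ₂ hroots habs
end

section
/- No complex root of the polynomial X⁴ − 3X³ − 4X² − 3X + 1 is a root of unity; that is, for every z ∈ ℂ with z⁴ − 3z³ − 4z² − 3z + 1 = 0 and every integer k ≥ 1 one has z^k ≠ 1. -/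
/-!
The quartic is palindromic, so for a root `z` the number `s = z + z⁻¹` satisfies
`s ^ 2 - 3 * s - 6 = 0`, i.e. `s = (3 ± √33) / 2`. If `z ^ k = 1`, then `s` is a root of the integer
polynomial `D_k - 2`, where `D_k = dickson 1 1 k` satisfies `D_k (z + z⁻¹) = z ^ k + z⁻ᵏ`. The roots
of `X ^ 2 - 3 * X - 6` are irrational, so an integer polynomial vanishing at one of them vanishes at
the other; hence `D_k ((3 + √33) / 2) = 2`.
But `D_k (t) > 2` whenever `t > 2` and `k ≥ 1`.
-/

open Polynomial

/-- Reducing `p` modulo `m` leaves a remainder `a * X + b` with `a * x + b = 0`, which forces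
`a = b = 0` since `x` is irrational. -/
theorem Irrational.aeval_eq_zero_of_monic_quadratic {m p : ℤ[X]} (hm : m.Monic)
    (hm2 : m.degree ≤ 2) {x y : ℝ} (hx : Irrational x) (hmx : aeval x m = 0)
    (hmy : aeval y m = 0) (hpx : aeval x p = 0) : aeval y p = 0 := by
  have hr : (p %ₘ m).degree ≤ 1 :=
    Order.le_of_lt_succ ((degree_modByMonic_lt p hm).trans_le hm2)
  have hrx : aeval x (p %ₘ m) = 0 := by
    rwa [← modByMonic_add_div p m, map_add, map_mul, hmx, zero_mul, add_zero] at hpx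
  rw [eq_X_add_C_of_degree_le_one hr] at hrx
  simp only [map_add, map_mul, aeval_X, aeval_C, algebraMap_int_eq, Int.coe_castRingHom] at hrx
  have ha : (p %ₘ m).coeff 1 = 0 := by
    by_contra ha
    exact ((hx.intCast_mul ha).add_intCast _).ne_zero hrx
  have hrem : p %ₘ m = 0 := by
    rw [ha, Int.cast_zero, zero_mul, zero_add, Int.cast_eq_zero] at hrx
    rw [eq_X_add_C_of_degree_le_one hr, ha, hrx, C_0, zero_mul, add_zero]
  rw [← modByMonic_add_div p m, hrem, map_add, map_mul, hmy, zero_mul, add_zero, map_zero]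

namespace Polynomial

theorem aeval_dickson_one_one {R : Type*} [CommRing R] (x : R) (n : ℕ) :
    aeval x (dickson 1 (1 : ℤ) n) = (dickson 1 (1 : R) n).eval x := by
  rw [aeval_def, eval₂_eq_eval_map, map_dickson, map_one]

theorem eval_dickson_one_one_add_inv_of_pow_eq_one {K : Type*} [Field K] {z : K} {k : ℕ}
    (hz : z ^ k = 1) : (dickson 1 (1 : K) k).eval (z + z⁻¹) = 2 := by
  rcases eq_or_ne z 0 with rfl | hz0
  · obtain rfl : k = 0 := by
      by_contra hk
      simp [zero_pow hk] at hz
    norm_num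
  · rw [dickson_one_one_eval_add_inv _ _ (mul_inv_cancel₀ hz0), inv_pow, hz, inv_one,
      one_add_one_eq_two]

theorem two_le_eval_dickson_one_one_and_lt_succ {t : ℝ} (ht : 2 < t) (n : ℕ) :
    2 ≤ (dickson 1 (1 : ℝ) n).eval t ∧
      (dickson 1 (1 : ℝ) n).eval t < (dickson 1 (1 : ℝ) (n + 1)).eval t := by
  induction n with
  | zero => norm_num; linarith
  | succ n ih =>
    simp only [dickson_add_two, eval_sub, eval_mul, eval_X, eval_C, one_mul]
    constructor <;> nlinarith

theorem two_lt_eval_dickson_one_one {t : ℝ} (ht : 2 < t) {n : ℕ} (hn : n ≠ 0) :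
    2 < (dickson 1 (1 : ℝ) n).eval t := by
  obtain ⟨n, rfl⟩ := Nat.exists_eq_succ_of_ne_zero hn
  have := two_le_eval_dickson_one_one_and_lt_succ ht n
  linarith

end Polynomial

theorem aeval_three_add_sqrt_thirtyThree_div_two_eq_zero {p : ℤ[X]} {x : ℂ}
    (hx : x ^ 2 - 3 * x - 6 = 0) (hpx : aeval x p = 0) : aeval ((3 + √33) / 2 : ℝ) p = 0 := by
  set m : ℤ[X] := X ^ 2 - 3 * X - 6
  set w : ℝ := (3 - √33) / 2
  set u : ℝ := (3 + √33) / 2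
  have h33 : √33 ^ 2 = 33 := Real.sq_sqrt (by norm_num)
  have hm : ∀ t : ℝ, aeval t m = t ^ 2 - 3 * t - 6 := fun t => by
    simp only [m, aeval_sub, map_pow, aeval_X, map_mul, map_ofNat]
  have hmw : aeval w m = 0 := by rw [hm]; linear_combination h33 / 4
  have hmu : aeval u m = 0 := by rw [hm]; linear_combination h33 / 4
  have hw : Irrational w := by
    have : Irrational √33 := by decide +kernel
    simpa using (this.natCast_sub 3).div_natCast two_ne_zero
  have hxwu : (x - w) * (x - u) = 0 := by
    have h33' : ((√33 : ℝ) : ℂ) ^ 2 = 33 := mod_cast h33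
    push_cast [w, u]
    linear_combination hx - h33' / 4
  rcases mul_eq_zero.mp hxwu with h | h
  · rw [sub_eq_zero.mp h, ← Complex.coe_algebraMap, aeval_algebraMap_eq_zero_iff] at hpx
    exact hw.aeval_eq_zero_of_monic_quadratic (by unfold m; monicity!)
      (by unfold m; compute_degree!) hmw hmu hpx
  · rwa [sub_eq_zero.mp h, ← Complex.coe_algebraMap, aeval_algebraMap_eq_zero_iff] at hpx

/-- The claim in §3.2 of the paper that the automorphism
`(e₁,e₂,e₃,e₄) ↦ (e₂,e₃,e₄,−e₁+3e₂+4e₃+3e₄)` of `E × E × E × E` is unity-free: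
no complex root of `X⁴ − 3X³ − 4X² − 3X + 1` is a root of unity. -/
theorem stmt_10 :
    ∀ z : ℂ, z ^ 4 - 3 * z ^ 3 - 4 * z ^ 2 - 3 * z + 1 = 0 →
      ∀ k : ℕ, 1 ≤ k → z ^ k ≠ 1 := by
  intro z hz k hk hzk
  have hz0 : z ≠ 0 := by rintro rfl; norm_num at hz
  have hs : (z + z⁻¹) ^ 2 - 3 * (z + z⁻¹) - 6 = 0 := by
    field_simp
    linear_combination hz
  have hq : aeval (z + z⁻¹) (dickson 1 1 k - 2 : ℤ[X]) = 0 := by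
    rw [map_sub, aeval_dickson_one_one, eval_dickson_one_one_add_inv_of_pow_eq_one hzk,
      map_ofNat, sub_self]
  have hqu := aeval_three_add_sqrt_thirtyThree_div_two_eq_zero hs hq
  rw [map_sub, aeval_dickson_one_one, map_ofNat, sub_eq_zero] at hqu
  have hu : 2 < (3 + √33) / 2 := by
    have : 1 < √33 := Real.lt_sqrt_of_sq_lt (by norm_num)
    linarith
  exact (two_lt_eval_dickson_one_one hu (by omega)).ne' hqu
end
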